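/- arXiv:1608.03937 — 4 statements merged into one kernel-verified Lean document; each statement's English description precedes it below -/
import Mathlib

section
/- Let G be a finite connected simple graph in which every vertex has degree at least 3, and let l be a positive edge-length function on G. Then the topological entropy h(l) of the length function on closed non-backtracking walks is finite and strictly positive: 0 < h(l) < ∞. -/
/-- A cyclic sequence of darts `d : Fin (n+1) → G.Dart` is a closed non-backtracking walk
if consecutive darts (cyclically) are composable and no dart is followed by its reversal. -/
def IsClosedNBWalk {V : Type*} (G : SimpleGraph V) {n : ℕ} (d : Fin (n + 1) → G.Dart) : Prop :=
  ∀ i : Fin (n + 1), (d i).toProd.2 = (d (i + 1)).toProd.1 ∧ d (i + 1) ≠ (d i).symm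

/-- The `l`-length of a cyclic sequence of darts: the sum of the lengths of the
underlying edges of its darts. -/
noncomputable def nbWalkLength {V : Type*} (G : SimpleGraph V) (l : Sym2 V → ℝ) {n : ℕ}
    (d : Fin (n + 1) → G.Dart) : ℝ :=
  ∑ i : Fin (n + 1), l (d i).edge

/-- `N_l(T)`: the number of closed non-backtracking walks of `l`-length at most `T`. -/
noncomputable def nbWalkCount {V : Type*} (G : SimpleGraph V) (l : Sym2 V → ℝ) (T : ℝ) : ℕ :=
  Nat.card {w : Σ n : ℕ, Fin (n + 1) → G.Dart //
    IsClosedNBWalk G w.2 ∧ nbWalkLength G l w.2 ≤ T}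

/-- The topological entropy of a metric `l` on the graph `G`:
`h(l) := limsup_{T → ∞} (1/T) · log N_l(T)`, valued in `[0, ∞]`. -/
noncomputable def graphEntropy {V : Type*} (G : SimpleGraph V) (l : Sym2 V → ℝ) : ENNReal :=
  Filter.limsup (fun T : ℝ => ENNReal.ofReal (Real.log (nbWalkCount G l T : ℝ) / T))
    Filter.atTop

/-!
If `m > 0` is the least edge length, a closed walk of `l`-length at most `T` has at most `T / m`
darts, so `N_l(T)` grows at most exponentially.

Conversely, the start `u` of a longest path `p₀ p₁ …` has all its neighbours on the path:
besides `p₁` two more, `p_i` and `p_j` with `2 ≤ i < j`. The cycles `u p₁ … p_i u` and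
`u p₁ … p_j u` leave `u` towards `p₁` and return from `p_i, p_j ≠ p₁`, so any concatenation of
them is non-backtracking. Repeated to a common length `n`, they give `2 ^ k` distinct closed
non-backtracking walks of `l`-length at most `k n · max l`, so `N_l(T)` grows at least
exponentially.
-/

open Function Filter SimpleGraph

lemma zero_lt_limsup_log_div {f : ℝ → ℕ} {c : ℝ} (hc : 0 < c)
    (hf : ∀ k : ℕ, 0 < k → ∀ T, k * c ≤ T → 2 ^ k ≤ f T) :
    0 < limsup (fun T => ENNReal.ofReal (Real.log (f T) / T)) atTop := by
  have hlog2 := Real.log_pos one_lt_two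
  have hev : ∀ᶠ T in atTop,
      ENNReal.ofReal (Real.log 2 / (2 * c)) ≤ ENNReal.ofReal (Real.log (f T) / T) := by
    filter_upwards [eventually_ge_atTop (2 * c)] with T hT
    have hkc : ⌊T / c⌋₊ * c ≤ T :=
      (le_div_iff₀ hc).1 (Nat.floor_le (div_nonneg (by linarith) hc.le))
    have hk : T - c < ⌊T / c⌋₊ * c := by
      have := Nat.sub_one_lt_floor (T / c)
      rw [sub_lt_iff_lt_add, div_lt_iff₀ hc] at this
      linarith
    have hk0 : 0 < ⌊T / c⌋₊ := by
      rw [← Nat.cast_pos (α := ℝ)]; nlinarith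
    have hlog : ⌊T / c⌋₊ * Real.log 2 ≤ Real.log (f T) := by
      rw [← Real.log_pow]
      exact Real.log_le_log (by positivity) (by exact_mod_cast hf _ hk0 T hkc)
    apply ENNReal.ofReal_le_ofReal
    rw [div_le_div_iff₀ (by positivity) (by linarith)]
    nlinarith [mul_le_mul_of_nonneg_right hlog hc.le]
  exact (ENNReal.ofReal_pos.2 (by positivity)).trans_le
    (le_limsup_of_frequently_le hev.frequently)

lemma limsup_log_div_lt_top {f : ℝ → ℕ} {m : ℝ} {a : ℕ} (hm : 0 < m)
    (hf : ∀ (k : ℕ) (T : ℝ), T ≤ k * m → f T ≤ a ^ k) :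
    limsup (fun T => ENNReal.ofReal (Real.log (f T) / T)) atTop < ⊤ := by
  refine lt_of_le_of_lt (limsup_le_of_le (a := ENNReal.ofReal ((1 / m + 1) * Real.log a))
    (by isBoundedDefault) ?_) ENNReal.ofReal_lt_top
  filter_upwards [eventually_ge_atTop 1] with T hT
  have hk : T ≤ ⌈T / m⌉₊ * m := (div_le_iff₀ hm).1 (Nat.le_ceil _)
  have hk' : (⌈T / m⌉₊ : ℝ) < T / m + 1 := Nat.ceil_lt_add_one (by positivity)
  have hloga := Real.log_natCast_nonneg a
  have hlog : Real.log (f T) ≤ ⌈T / m⌉₊ * Real.log a := by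
    rcases (f T).eq_zero_or_pos with h0 | hpos
    · simp only [h0, Nat.cast_zero, Real.log_zero]; positivity
    · rw [← Real.log_pow]
      exact Real.log_le_log (by exact_mod_cast hpos) (by exact_mod_cast hf _ T hk)
  apply ENNReal.ofReal_le_ofReal
  rw [div_le_iff₀ (by linarith)]
  have : T / m + 1 ≤ (1 / m + 1) * T := by rw [add_mul, one_div_mul_eq_div]; linarith
  nlinarith

section

variable {V : Type*} {G : SimpleGraph V} {l : Sym2 V → ℝ}

lemma nbWalkLength_le {L : ℝ} (hL : ∀ d : G.Dart, l d.edge ≤ L) {n : ℕ}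
    (d : Fin (n + 1) → G.Dart) : nbWalkLength G l d ≤ (n + 1) * L := by
  simpa [nbWalkLength] using Finset.sum_le_card_nsmul Finset.univ _ L fun i _ => hL (d i)

lemma le_nbWalkLength {m : ℝ} (hm : ∀ d : G.Dart, m ≤ l d.edge) {n : ℕ}
    (d : Fin (n + 1) → G.Dart) : (n + 1) * m ≤ nbWalkLength G l d := by
  simpa [nbWalkLength] using Finset.card_nsmul_le_sum Finset.univ _ m fun i _ => hm (d i)

abbrev ClosedNBWalksLE (G : SimpleGraph V) (l : Sym2 V → ℝ) (T : ℝ) :=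
  {w : Σ n : ℕ, Fin (n + 1) → G.Dart // IsClosedNBWalk G w.2 ∧ nbWalkLength G l w.2 ≤ T}

/-- A walk of `l`-length at most `k * m` has at most `k` darts: record their number and the darts,
padded by `none`. -/
lemma exists_injective_closedNBWalksLE {m : ℝ} (hm : 0 < m)
    (hml : ∀ d : G.Dart, m ≤ l d.edge) {T : ℝ} {k : ℕ} (hT : T ≤ k * m) :
    ∃ f : ClosedNBWalksLE G l T → Fin k × (Fin k → Option G.Dart), Injective f := by
  have hlt (w : ClosedNBWalksLE G l T) : w.1.1 < k := by
    have h := ((le_nbWalkLength hml w.1.2).trans w.2.2).trans hT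
    exact_mod_cast (le_of_mul_le_mul_right h hm : (w.1.1 : ℝ) + 1 ≤ k)
  refine ⟨fun w => (⟨w.1.1, hlt w⟩,
    fun i => if h : (i : ℕ) < w.1.1 + 1 then some (w.1.2 ⟨i, h⟩) else none), ?_⟩
  rintro ⟨⟨n, d⟩, hw⟩ ⟨⟨n', d'⟩, hw'⟩ h
  simp only [Prod.mk.injEq, Fin.mk.injEq] at h
  obtain ⟨rfl, h⟩ := h
  have hn : n < k := hlt ⟨⟨n, d⟩, hw⟩
  congr
  funext j
  simpa [Nat.lt_succ_iff.1 j.2] using congrFun h ⟨j, by omega⟩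

lemma finite_closedNBWalksLE [Finite G.Dart] {m : ℝ} (hm : 0 < m)
    (hml : ∀ d : G.Dart, m ≤ l d.edge) (T : ℝ) : Finite (ClosedNBWalksLE G l T) := by
  obtain ⟨k, hk⟩ := exists_nat_ge (T / m)
  obtain ⟨f, hf⟩ := exists_injective_closedNBWalksLE hm hml ((div_le_iff₀ hm).1 hk)
  exact Finite.of_injective f hf

lemma nbWalkCount_le [Finite G.Dart] {m : ℝ} (hm : 0 < m)
    (hml : ∀ d : G.Dart, m ≤ l d.edge) {T : ℝ} {k : ℕ} (hT : T ≤ k * m) :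
    nbWalkCount G l T ≤ (2 * (Nat.card G.Dart + 1)) ^ k := by
  obtain ⟨f, hf⟩ := exists_injective_closedNBWalksLE hm hml hT
  calc nbWalkCount G l T ≤ Nat.card (Fin k × (Fin k → Option G.Dart)) :=
        Nat.card_le_card_of_injective f hf
    _ = k * (Nat.card G.Dart + 1) ^ k := by simp [Nat.card_fun]
    _ ≤ (2 * (Nat.card G.Dart + 1)) ^ k := by
        rw [mul_pow]; exact Nat.mul_le_mul_right _ Nat.lt_two_pow_self.le

def IsNBSeq (G : SimpleGraph V) (x : ℕ → V) : Prop :=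
  ∀ t, G.Adj (x t) (x (t + 1)) ∧ x (t + 2) ≠ x t

namespace IsNBSeq

variable {x : ℕ → V}

def dart (hx : IsNBSeq G x) (t : ℕ) : G.Dart := ⟨(x t, x (t + 1)), (hx t).1⟩

lemma isClosedNBWalk (hx : IsNBSeq G x) {n : ℕ} (hper : Periodic x (n + 1)) :
    IsClosedNBWalk G fun i : Fin (n + 1) => hx.dart i := by
  intro i
  have h₁ : x ((i + 1 : Fin (n + 1)) : ℕ) = x (i + 1) := by
    simpa [Fin.val_add] using hper.map_mod_nat (i + 1)
  have h₂ : x ((i + 1 : Fin (n + 1)) + 1 : ℕ) = x (i + 2) := by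
    simpa [Fin.val_add] using (hper.add_const 1).map_mod_nat (i + 1)
  refine ⟨h₁.symm, fun h => (hx i).2 ?_⟩
  simpa [dart, Dart.ext_iff, h₁, h₂] using h

end IsNBSeq

/-- Closed non-backtracking walks `x b 0, …, x b n = x b 0` of a common length `n` through a
common base vertex, any two of which can be concatenated without backtracking. -/
structure IsNBBouquet {ι : Type*} (G : SimpleGraph V) (x : ι → ℕ → V) (n : ℕ) : Prop where
  two_le : 2 ≤ n
  isNBSeq : ∀ b, IsNBSeq G (x b)
  closed : ∀ b, x b n = x b 0
  base : ∀ b b', x b 0 = x b' 0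
  junction : ∀ b b', x b (n - 1) ≠ x b' 1

def spliceSeq {ι : Type*} (x : ι → ℕ → V) (n : ℕ) (s : ℕ → ι) (t : ℕ) : V :=
  x (s (t / n)) (t % n)

section Splice

variable {ι : Type*} {x : ι → ℕ → V} {n : ℕ} {s : ℕ → ι}

lemma spliceSeq_mul_add {r : ℕ} (hr : r < n) (q : ℕ) :
    spliceSeq x n s (n * q + r) = x (s q) r := by
  simp [spliceSeq, Nat.mul_add_div (by omega : 0 < n), Nat.div_eq_of_lt hr, Nat.mod_eq_of_lt hr]

lemma spliceSeq_periodic {k : ℕ} (hs : Periodic s k) : Periodic (spliceSeq x n s) (k * n) := by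
  rcases n.eq_zero_or_pos with rfl | hn
  · simp [Periodic]
  intro t
  simp [spliceSeq, Nat.add_mul_div_right _ _ hn, hs (t / n)]

lemma IsNBBouquet.isNBSeq_spliceSeq (hx : IsNBBouquet G x n) (s : ℕ → ι) :
    IsNBSeq G (spliceSeq x n s) := by
  have hn := hx.two_le
  intro t
  obtain ⟨q, r, hr, rfl⟩ : ∃ q r, r < n ∧ t = n * q + r :=
    ⟨t / n, t % n, Nat.mod_lt _ (by omega), (Nat.div_add_mod t n).symm⟩
  have hz {r'} (h : r' < n) (q') := spliceSeq_mul_add (x := x) (s := s) h q'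
  -- Across a block boundary the next loop restarts at the common base `x _ 0 = x (s q) n`.
  rcases (by omega : r + 2 < n ∨ r + 2 = n ∨ r + 1 = n) with h | h | h
  · rw [add_assoc, add_assoc, hz hr, hz (by omega), hz h]
    exact hx.isNBSeq (s q) r
  · have e : n * q + (r + 2) = n * (q + 1) + 0 := by rw [h]; ring
    rw [add_assoc, add_assoc, hz hr, hz (by omega), e, hz (by omega), hx.base _ (s q),
      ← hx.closed, ← h]
    exact hx.isNBSeq (s q) r
  · have e₁ : n * q + r + 1 = n * (q + 1) + 0 := by rw [add_assoc, h]; ring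
    have e₂ : n * q + r + 2 = n * (q + 1) + 1 := by rw [← add_zero (n * (q + 1)), ← e₁]
    rw [hz hr, e₁, e₂, hz (by omega), hz (by omega), hx.base _ (s q), ← hx.closed, ← h]
    refine ⟨(hx.isNBSeq (s q) r).1, ?_⟩
    simpa [← h] using (hx.junction (s q) (s (q + 1))).symm

end Splice

lemma IsNBBouquet.card_pow_le_nbWalkCount {ι : Type*} [Fintype ι] {x : ι → ℕ → V} {n r : ℕ}
    (hx : IsNBBouquet G x n) (hr : r < n) (hinj : Injective fun b => x b r) {L T : ℝ}
    (hL : ∀ d : G.Dart, l d.edge ≤ L) {k : ℕ} (hk : 0 < k) (hT : k * n * L ≤ T)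
    [Finite (ClosedNBWalksLE G l T)] :
    Fintype.card ι ^ k ≤ nbWalkCount G l T := by
  have hN : k * n - 1 + 1 = k * n :=
    Nat.sub_add_cancel (Nat.mul_pos hk (by have := hx.two_le; omega))
  let s (w : Fin k → ι) (q : ℕ) : ι := w ⟨q % k, Nat.mod_lt _ hk⟩
  have hz (w : Fin k → ι) := hx.isNBSeq_spliceSeq (s w)
  have hper (w : Fin k → ι) : Periodic (spliceSeq x n (s w)) (k * n - 1 + 1) := by
    rw [hN]; exact spliceSeq_periodic fun q => by simp [s]
  let F (w : Fin k → ι) : ClosedNBWalksLE G l T :=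
    ⟨⟨k * n - 1, fun i => (hz w).dart i⟩, (hz w).isClosedNBWalk (hper w),
      (nbWalkLength_le hL _).trans (by rw [← Nat.cast_add_one, hN]; push_cast; exact hT)⟩
  have hF : Injective F := by
    intro w w' h
    have hd := eq_of_heq (Sigma.mk.inj_iff.1 (congrArg Subtype.val h)).2
    funext q
    have hq : n * q + r < k * n - 1 + 1 := by
      rw [hN]; nlinarith [q.2]
    have := congrArg (fun d => (d ⟨n * q + r, hq⟩).toProd.1) hd
    dsimp only [IsNBSeq.dart, F] at this
    rw [spliceSeq_mul_add hr, spliceSeq_mul_add hr] at this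
    exact hinj (by simpa [s, Nat.mod_eq_of_lt q.2] using this)
  simpa [nbWalkCount] using Nat.card_le_card_of_injective F hF

namespace SimpleGraph.Walk.IsPath

variable {u v : V} {p : G.Walk u v}

lemma isNBSeq_getVert_mod (hp : p.IsPath) {i : ℕ} (hi : 2 ≤ i) (hil : i ≤ p.length)
    (hadj : G.Adj (p.getVert i) u) : IsNBSeq G fun t => p.getVert (t % (i + 1)) := by
  intro t
  have hr := Nat.mod_lt t (show 0 < i + 1 by omega)
  have hr₂ := Nat.mod_lt (t + 2) (show 0 < i + 1 by omega)
  refine ⟨?_, fun h => ?_⟩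
  · dsimp only
    rw [Nat.add_mod_eq_ite, Nat.mod_eq_of_lt (show 1 < i + 1 by omega)]
    split_ifs with h
    · rwa [show t % (i + 1) = i by omega, show i + 1 - (i + 1) = 0 by omega, p.getVert_zero]
    · exact p.adj_getVert_succ (by omega)
  · have hmod := hp.getVert_injOn (by simp; omega) (by simp; omega) h
    have h2 : 2 ≡ 0 [MOD i + 1] := Nat.ModEq.add_left_cancel' t hmod
    have := Nat.le_of_dvd two_pos ((Nat.modEq_zero_iff_dvd).1 h2)
    omega

end SimpleGraph.Walk.IsPath

lemma exists_isPath_two_chords [Fintype V] [DecidableRel G.Adj] [Nonempty V]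
    (hdeg : ∀ v : V, 3 ≤ G.degree v) :
    ∃ (u v : V) (p : G.Walk u v) (i j : ℕ), p.IsPath ∧ 2 ≤ i ∧ i < j ∧ j ≤ p.length ∧
      G.Adj (p.getVert i) u ∧ G.Adj (p.getVert j) u := by
  classical
  obtain ⟨u, v, p, hp, hmax⟩ := Walk.exists_isPath_forall_isPath_length_le_length G
  have hsupp {w : V} (hw : G.Adj u w) : w ∈ p.support := by
    by_contra h
    simpa using hmax _ _ _ (hp.cons h (h := hw.symm))
  have hcard : 1 < ((G.neighborFinset u).erase (p.getVert 1)).card := by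
    have := Finset.pred_card_le_card_erase (s := G.neighborFinset u) (a := p.getVert 1)
    rw [card_neighborFinset_eq_degree] at this
    have := hdeg u
    omega
  obtain ⟨w, hw, w', hw', hne⟩ := Finset.one_lt_card.1 hcard
  simp only [Finset.mem_erase, mem_neighborFinset] at hw hw'
  obtain ⟨i, rfl, hi⟩ := Walk.mem_support_iff_exists_getVert.1 (hsupp hw.2)
  obtain ⟨j, rfl, hj⟩ := Walk.mem_support_iff_exists_getVert.1 (hsupp hw'.2)
  have h2 {i : ℕ} (h : p.getVert i ≠ p.getVert 1) (hadj : G.Adj u (p.getVert i)) : 2 ≤ i := by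
    have : i ≠ 0 := by rintro rfl; exact hadj.ne p.getVert_zero.symm
    have : i ≠ 1 := by rintro rfl; exact h rfl
    omega
  rcases lt_or_gt_of_ne (fun h : i = j => hne (h ▸ rfl)) with h | h
  · exact ⟨u, v, p, i, j, hp, h2 hw.1 hw.2, h, hj, hw.2.symm, hw'.2.symm⟩
  · exact ⟨u, v, p, j, i, hp, h2 hw'.1 hw'.2, h, hi, hw'.2.symm, hw.2.symm⟩

/-- The two cycles closed by the chords, run `j + 1` resp. `i + 1` times to equalise their
lengths; they first differ at time `i + 1`, when only the shorter one is back at `u`. -/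
lemma exists_isNBBouquet_bool [Fintype V] [DecidableRel G.Adj] [Nonempty V]
    (hdeg : ∀ v : V, 3 ≤ G.degree v) :
    ∃ (x : Bool → ℕ → V) (n r : ℕ), IsNBBouquet G x n ∧ r < n ∧ Injective fun b => x b r := by
  obtain ⟨u, v, p, i, j, hp, hi, hij, hj, hadjᵢ, hadjⱼ⟩ := exists_isPath_two_chords hdeg
  have hinj {a b : ℕ} (ha : a ≤ p.length) (hb : b ≤ p.length) (h : a ≠ b) :
      p.getVert a ≠ p.getVert b := fun e => h (hp.getVert_injOn (by simpa) (by simpa) e)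
  let c : Bool → ℕ := fun b => bif b then i else j
  have hc (b : Bool) : 2 ≤ c b ∧ c b ≤ p.length ∧ G.Adj (p.getVert (c b)) u := by
    cases b <;> simp only [c, cond_false, cond_true]
    exacts [⟨by omega, hj, hadjⱼ⟩, ⟨hi, by omega, hadjᵢ⟩]
  have hn (b : Bool) : ∃ e, (i + 1) * (j + 1) = e * (c b + 1) := by
    cases b
    exacts [⟨i + 1, rfl⟩, ⟨j + 1, mul_comm _ _⟩]
  refine ⟨fun b t => p.getVert (t % (c b + 1)), (i + 1) * (j + 1), i + 1,
    ⟨by nlinarith, fun b => hp.isNBSeq_getVert_mod (hc b).1 (hc b).2.1 (hc b).2.2,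
      fun b => ?_, fun b b' => by simp, fun b b' => ?_⟩, by nlinarith, ?_⟩
  · obtain ⟨e, he⟩ := hn b
    simp [he]
  · obtain ⟨e, he⟩ := hn b
    obtain ⟨hcb, hcl, -⟩ := hc b
    have hlast : (i + 1) * (j + 1) - 1 = (e - 1) * (c b + 1) + c b := by
      rcases e with _ | e
      · simp at he
      · rw [he]; simp only [add_tsub_cancel_right]; ring_nf; omega
    simp only [hlast, Nat.mul_add_mod_of_lt (Nat.lt_succ_self _),
      Nat.mod_eq_of_lt (show 1 < c b' + 1 by have := (hc b').1; omega)]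
    exact hinj hcl (by omega) (by omega)
  · have h₁ : u ≠ p.getVert (i + 1) := by
      simpa using hinj (a := 0) (b := i + 1) (by omega) (by omega) (by omega)
    intro b b'
    cases b <;> cases b' <;> simp [c, Nat.mod_eq_of_lt (show i + 1 < j + 1 by omega), h₁, h₁.symm]

lemma exists_pos_le_dart_length [Finite G.Dart] (hl : ∀ e ∈ G.edgeSet, 0 < l e) :
    ∃ m > 0, ∀ d : G.Dart, m ≤ l d.edge := by
  rcases isEmpty_or_nonempty G.Dart with h | h
  · exact ⟨1, one_pos, isEmptyElim⟩
  · obtain ⟨d₀, hd₀⟩ := Finite.exists_min fun d : G.Dart => l d.edge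
    exact ⟨_, hl _ d₀.edge_mem, hd₀⟩

lemma exists_pos_dart_length_le [Finite G.Dart] (l : Sym2 V → ℝ) :
    ∃ L > 0, ∀ d : G.Dart, l d.edge ≤ L := by
  obtain ⟨L, hL⟩ := (Set.finite_range fun d : G.Dart => l d.edge).bddAbove
  exact ⟨max L 1, by positivity, fun d => (hL ⟨d, rfl⟩).trans (le_max_left _ _)⟩

end

/-- For a finite connected simple graph with all degrees at least `3` and a positive
edge-length function, the topological entropy is finite and strictly positive. -/
theorem graphEntropy_pos_and_finite {V : Type*} [Fintype V] (G : SimpleGraph V)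
    [DecidableRel G.Adj]
    (hconn : G.Connected) (hdeg : ∀ v : V, 3 ≤ G.degree v)
    (l : Sym2 V → ℝ) (hl : ∀ e ∈ G.edgeSet, 0 < l e) :
    0 < graphEntropy G l ∧ graphEntropy G l < ⊤ := by
  have : Nonempty V := hconn.nonempty
  obtain ⟨m, hm, hml⟩ := exists_pos_le_dart_length hl
  obtain ⟨L, hL, hLl⟩ := exists_pos_dart_length_le (G := G) l
  obtain ⟨x, n, r, hx, hr, hinj⟩ := exists_isNBBouquet_bool hdeg
  have hn : (0 : ℝ) < n := Nat.cast_pos.2 (by have := hx.two_le; omega)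
  refine ⟨zero_lt_limsup_log_div (mul_pos hn hL) fun k hk T hT => ?_,
    limsup_log_div_lt_top hm fun k T hT => nbWalkCount_le hm hml hT⟩
  have := finite_closedNBWalksLE hm hml T
  simpa using hx.card_pow_le_nbWalkCount hr hinj hLl hk (by rwa [mul_assoc])
end

section
/- Let a, b, c be positive real numbers satisfying the strict triangle inequalities a < b + c, b < a + c, c < a + b. For λ > 0 let α(λ) ≥ 0 be the unique nonnegative real with cosh(α(λ)) = (cosh(λa) + cosh(λb)·cosh(λc)) / (sinh(λb)·sinh(λc)) (this right-hand side is always > 1, so α(λ) is well defined and positive). Then lim_{λ→∞} α(λ)·exp(λ(b + c − a)/2) = 2. In particular α(λ) → 0 exponentially fast, with (1/λ)·log α(λ) → −(b + c − a)/2. -/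
/-!
By `cosh y cosh z - sinh y sinh z = cosh (y - z)` and sum-to-product, the right-hand side of the
cosine rule minus one is `2 cosh (λ(a+b-c)/2) cosh (λ(a-b+c)/2) / (sinh λb sinh λc)`. The
triangle inequalities send all four arguments to `+∞`, where `cosh` and `sinh` are equivalent
to `exp / 2`, so `cosh α - 1 ~ 2 exp (-λ(b+c-a))`. Writing `cosh α - 1 = 2 sinh² (α/2)` and
using `arsinh t ~ t` at `0` turns this into `α ~ 2 exp (-λ(b+c-a)/2)`.
-/

open Real Filter Topology Asymptotics

theorem Asymptotics.IsEquivalent.of_sq {α : Type*} {l : Filter α} {u v : α → ℝ}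
    (hu : ∀ᶠ x in l, 0 ≤ u x) (hv : 0 ≤ v) (h : u ^ 2 ~[l] v ^ 2) : u ~[l] v := by
  have hroot := h.rpow (fun x => sq_nonneg (v x)) (r := ((2 : ℕ) : ℝ)⁻¹)
  refine (hroot.congr_left ?_).congr_right ?_
  · filter_upwards [hu] with x hx
    exact pow_rpow_inv_natCast hx two_ne_zero
  · exact Eventually.of_forall fun x => pow_rpow_inv_natCast (hv x) two_ne_zero

namespace Real

theorem isLittleO_exp_neg_exp_atTop : (fun x => exp (-x) / 2) =o[atTop] fun x => exp x / 2 := by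
  have h : (fun x => exp (-x)) =o[atTop] exp := by
    rw [isLittleO_exp_comp_exp_comp]
    simpa only [sub_neg_eq_add, ← two_mul, id_eq] using tendsto_id.const_mul_atTop' two_pos
  simpa only [div_eq_inv_mul] using (h.const_mul_left _).const_mul_right (inv_ne_zero two_ne_zero)

theorem isEquivalent_cosh_atTop : cosh ~[atTop] fun x => exp x / 2 := by
  have h : cosh = (fun x => exp x / 2) + fun x => exp (-x) / 2 := by
    ext x; simp only [cosh_eq, add_div, Pi.add_apply]
  rw [h]
  exact IsEquivalent.refl.add_isLittleO isLittleO_exp_neg_exp_atTop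

theorem isEquivalent_sinh_atTop : sinh ~[atTop] fun x => exp x / 2 := by
  have h : sinh = (fun x => exp x / 2) - fun x => exp (-x) / 2 := by
    ext x; simp only [sinh_eq, sub_div, Pi.sub_apply]
  rw [h]
  exact IsEquivalent.refl.sub_isLittleO isLittleO_exp_neg_exp_atTop

theorem isEquivalent_arsinh_nhds_zero : arsinh ~[𝓝 0] id := by
  have h := (hasDerivAt_arsinh 0).isLittleO
  simp only [arsinh_zero, sub_zero, zero_pow two_ne_zero, add_zero, sqrt_one, inv_one,
    smul_eq_mul, mul_one] at h
  exact h

theorem cosh_add_cosh (x y : ℝ) :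
    cosh x + cosh y = 2 * cosh ((x + y) / 2) * cosh ((x - y) / 2) := by
  have hx : cosh x = cosh ((x + y) / 2 + (x - y) / 2) := by ring_nf
  have hy : cosh y = cosh ((x + y) / 2 - (x - y) / 2) := by ring_nf
  rw [hx, hy, cosh_add, cosh_sub]
  ring

theorem cosh_sub_one (x : ℝ) : cosh x - 1 = 2 * sinh (x / 2) ^ 2 := by
  conv_lhs => rw [show x = 2 * (x / 2) by ring]
  rw [cosh_two_mul, cosh_sq]
  ring

theorem isEquivalent_of_cosh_sub_one {ι : Type*} {l : Filter ι} {u v : ι → ℝ}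
    (hu : ∀ᶠ x in l, 0 ≤ u x) (hv : 0 ≤ v) (hv₀ : Tendsto v l (𝓝 0))
    (h : (fun x => cosh (u x) - 1) ~[l] fun x => v x ^ 2 / 2) : u ~[l] v := by
  set s := fun x => sinh (u x / 2)
  have hs_sq : s ^ 2 ~[l] (v / 2) ^ 2 := by
    refine (h.div (IsEquivalent.refl (u := fun _ => (2 : ℝ)))).congr_left ?_ |>.congr_right ?_
    · exact Eventually.of_forall fun x => by simp [s, cosh_sub_one]
    · refine Eventually.of_forall fun x => ?_
      simp only [Pi.div_apply, Pi.pow_apply, Pi.ofNat_apply]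
      ring
  have hs : s ~[l] v / 2 := by
    refine hs_sq.of_sq ?_ (fun x => div_nonneg (hv x) zero_le_two)
    filter_upwards [hu] with x hx
    exact sinh_nonneg_iff.2 (by positivity)
  have hs₀ : Tendsto s l (𝓝 0) := by
    simpa using hs.symm.tendsto_nhds (hv₀.div_const 2)
  have hhalf : (fun x => u x / 2) ~[l] v / 2 := by
    refine (isEquivalent_arsinh_nhds_zero.comp_tendsto hs₀).trans hs |>.congr_left ?_
    exact Eventually.of_forall fun x => arsinh_sinh _
  refine (hhalf.mul (IsEquivalent.refl (u := fun _ => (2 : ℝ)))).congr_left ?_ |>.congr_right ?_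
  all_goals exact Eventually.of_forall fun x => div_mul_cancel₀ _ two_ne_zero

theorem isEquivalent_cosh_mul_atTop {k : ℝ} (hk : 0 < k) :
    (fun L => cosh (L * k)) ~[atTop] fun L => exp (L * k) / 2 :=
  isEquivalent_cosh_atTop.comp_tendsto (tendsto_id.atTop_mul_const hk)

theorem isEquivalent_sinh_mul_atTop {k : ℝ} (hk : 0 < k) :
    (fun L => sinh (L * k)) ~[atTop] fun L => exp (L * k) / 2 :=
  isEquivalent_sinh_atTop.comp_tendsto (tendsto_id.atTop_mul_const hk)

end Real

theorem tendsto_log_div_of_tendsto_mul_exp {f : ℝ → ℝ} {k c : ℝ} (hc : 0 < c)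
    (h : Tendsto (fun L => f L * exp (L * k)) atTop (𝓝 c)) :
    Tendsto (fun L => log (f L) / L) atTop (𝓝 (-k)) := by
  have hlog : Tendsto (fun L => log (f L * exp (L * k)) / L) atTop (𝓝 0) :=
    ((continuousAt_log hc.ne').tendsto.comp h).div_atTop tendsto_id
  refine (zero_sub k ▸ hlog.sub_const k).congr' ?_
  filter_upwards [h.eventually (eventually_gt_nhds hc), eventually_gt_atTop 0] with L hpos hL
  rw [log_mul (left_ne_zero_of_mul hpos.ne') (exp_ne_zero _), log_exp]
  field_simp
  ring

theorem hexagon_cosh_sub_one_isEquivalent {a b c : ℝ} (hb : 0 < b) (hc : 0 < c)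
    (h₂ : b < a + c) (h₃ : c < a + b) :
    (fun L => (cosh (L * a) + cosh (L * b) * cosh (L * c)) / (sinh (L * b) * sinh (L * c)) - 1)
      ~[atTop] fun L => 2 * exp (-(L * (b + c - a))) := by
  have hprod := ((IsEquivalent.refl (u := fun _ : ℝ => (2 : ℝ))).mul
      (isEquivalent_cosh_mul_atTop (k := (a + b - c) / 2) (by linarith)) |>.mul
      (isEquivalent_cosh_mul_atTop (k := (a - b + c) / 2) (by linarith))).div
    ((isEquivalent_sinh_mul_atTop hb).mul (isEquivalent_sinh_mul_atTop hc))
  refine (hprod.congr_left ?_).congr_right ?_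
  · filter_upwards [eventually_gt_atTop 0] with L hL
    have hS : sinh (L * b) * sinh (L * c) ≠ 0 :=
      (mul_pos (sinh_pos_iff.2 (mul_pos hL hb)) (sinh_pos_iff.2 (mul_pos hL hc))).ne'
    simp only [Pi.mul_apply, Pi.div_apply]
    rw [div_sub_one hS, add_sub_assoc (cosh (L * a)), ← cosh_sub, cosh_add_cosh]
    ring_nf
  · refine Eventually.of_forall fun L => ?_
    simp only [Pi.mul_apply, Pi.div_apply]
    rw [show -(L * (b + c - a))
        = L * ((a + b - c) / 2) + L * ((a - b + c) / 2) - L * b - L * c by ring,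
      exp_sub, exp_sub, exp_add]
    field_simp

theorem hexagon_side_isEquivalent {a b c : ℝ} (hb : 0 < b) (hc : 0 < c)
    (h₁ : a < b + c) (h₂ : b < a + c) (h₃ : c < a + b) {α : ℝ → ℝ}
    (hα₀ : ∀ᶠ L in atTop, 0 ≤ α L)
    (hα : ∀ᶠ L in atTop, cosh (α L) =
      (cosh (L * a) + cosh (L * b) * cosh (L * c)) / (sinh (L * b) * sinh (L * c))) :
    α ~[atTop] fun L => 2 * exp (-(L * ((b + c - a) / 2))) := by
  have hε : 0 < (b + c - a) / 2 := by linarith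
  have hv₀ : Tendsto (fun L => 2 * exp (-(L * ((b + c - a) / 2)))) atTop (𝓝 0) := by
    simpa using (tendsto_exp_neg_atTop_nhds_zero.comp (tendsto_id.atTop_mul_const hε)).const_mul 2
  refine isEquivalent_of_cosh_sub_one hα₀ (fun L => by positivity) hv₀ ?_
  refine (hexagon_cosh_sub_one_isEquivalent hb hc h₂ h₃).congr_left ?_ |>.congr_right ?_
  · filter_upwards [hα] with L hL
    rw [hL]
  · refine Eventually.of_forall fun L => ?_
    dsimp only
    rw [mul_pow, ← exp_nat_mul]
    ring_nf

theorem hexagon_side_asymptotics_general (a b c : ℝ) (hb : 0 < b) (hc : 0 < c)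
    (tri₁ : a < b + c) (tri₂ : b < a + c) (tri₃ : c < a + b)
    (α : ℝ → ℝ)
    (hα : ∀ L : ℝ, 0 < L → 0 ≤ α L ∧
      Real.cosh (α L) =
        (Real.cosh (L * a) + Real.cosh (L * b) * Real.cosh (L * c)) /
          (Real.sinh (L * b) * Real.sinh (L * c))) :
    Filter.Tendsto (fun L : ℝ => α L * Real.exp (L * (b + c - a) / 2))
        Filter.atTop (nhds 2) ∧
      Filter.Tendsto (fun L : ℝ => Real.log (α L) / L)
        Filter.atTop (nhds (-(b + c - a) / 2)) := by
  have hαv := hexagon_side_isEquivalent hb hc tri₁ tri₂ tri₃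
    (eventually_gt_atTop 0 |>.mono fun L hL => (hα L hL).1)
    (eventually_gt_atTop 0 |>.mono fun L hL => (hα L hL).2)
  have hlim : Tendsto (fun L => α L * exp (L * ((b + c - a) / 2))) atTop (𝓝 2) := by
    refine IsEquivalent.tendsto_const ((hαv.mul IsEquivalent.refl).congr_right ?_)
    refine Eventually.of_forall fun L => ?_
    simp only [Pi.mul_apply, mul_assoc, ← exp_add, neg_add_cancel, exp_zero, mul_one,
      Function.const_apply]
  refine ⟨by simpa only [mul_div_assoc] using hlim, ?_⟩
  simpa only [neg_div] using tendsto_log_div_of_tendsto_mul_exp two_pos hlim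

/-- Asymptotics of the hexagon side from the cosine rule for right-angled hexagons:
if `a, b, c > 0` satisfy the strict triangle inequalities and `α L ≥ 0` is defined by
`cosh (α L) = (cosh (L·a) + cosh (L·b)·cosh (L·c)) / (sinh (L·b)·sinh (L·c))` for `L > 0`,
then `α L · exp (L·(b + c − a)/2) → 2` as `L → ∞`; in particular `α L → 0` exponentially
fast, with `(1/L)·log (α L) → −(b + c − a)/2`. -/
theorem hexagon_side_asymptotics (a b c : ℝ) (ha : 0 < a) (hb : 0 < b) (hc : 0 < c)
    (tri₁ : a < b + c) (tri₂ : b < a + c) (tri₃ : c < a + b)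
    (α : ℝ → ℝ)
    (hα : ∀ L : ℝ, 0 < L → 0 ≤ α L ∧
      Real.cosh (α L) =
        (Real.cosh (L * a) + Real.cosh (L * b) * Real.cosh (L * c)) /
          (Real.sinh (L * b) * Real.sinh (L * c))) :
    Filter.Tendsto (fun L : ℝ => α L * Real.exp (L * (b + c - a) / 2))
        Filter.atTop (nhds 2) ∧
      Filter.Tendsto (fun L : ℝ => Real.log (α L) / L)
        Filter.atTop (nhds (-(b + c - a) / 2)) :=
  hexagon_side_asymptotics_general a b c hb hc tri₁ tri₂ tri₃ α hα
end

section
/- Let u₁, u₂, u₃ be strictly positive real numbers and let α₁, α₂, α₃ : (0,∞) → (0,∞) be functions such that lim_{λ→∞} (1/λ)·log α_m(λ) = −u_m for m = 1, 2, 3. For λ > 0 let B(λ) ≥ 0 be the unique nonnegative real with cosh(B(λ)) = (cosh(α₃(λ)) + cosh(α₁(λ))·cosh(α₂(λ))) / (sinh(α₁(λ))·sinh(α₂(λ))) (this right-hand side is always > 1, so B(λ) is well defined and positive). Then lim_{λ→∞} B(λ)/λ = u₁ + u₂. -/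
open Real Filter

/-- `sinh x ≤ x * exp x` for `x ≥ 0`. -/
lemma my_sinh_le_mul_exp {x : ℝ} (hx : 0 ≤ x) : Real.sinh x ≤ x * Real.exp x := by
  rw [Real.sinh_eq]
  have h1 : Real.exp (-x) * Real.exp x = 1 := by
    rw [← Real.exp_add]; simp
  have h2 : 1 + (-2 * x) ≤ Real.exp (-2 * x) := by
    have := Real.add_one_le_exp (-2 * x); linarith
  have h3 : Real.exp (-2 * x) * Real.exp x = Real.exp (-x) := by
    rw [← Real.exp_add]; ring_nf
  have h4 : (0:ℝ) < Real.exp x := Real.exp_pos _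
  nlinarith [Real.exp_pos (-x), Real.exp_pos (-2*x)]

/-- `sinh x ≤ 3 * x` for `0 ≤ x ≤ 1`. -/
lemma my_sinh_le_three {x : ℝ} (hx : 0 ≤ x) (hx1 : x ≤ 1) : Real.sinh x ≤ 3 * x := by
  have := my_sinh_le_mul_exp hx
  have he : Real.exp x ≤ Real.exp 1 := Real.exp_le_exp.mpr hx1
  have h3 : Real.exp 1 < 3 := by
    have := Real.exp_one_lt_d9; linarith
  nlinarith

/-- `cosh x ≤ exp x` for `x ≥ 0`. -/
lemma my_cosh_le_exp {x : ℝ} (hx : 0 ≤ x) : Real.cosh x ≤ Real.exp x := by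
  rw [Real.cosh_eq]
  have : Real.exp (-x) ≤ Real.exp x := Real.exp_le_exp.mpr (by linarith)
  linarith

lemma my_cosh_le_three {x : ℝ} (hx : 0 ≤ x) (hx1 : x ≤ 1) : Real.cosh x ≤ 3 := by
  have := my_cosh_le_exp hx
  have he : Real.exp x ≤ Real.exp 1 := Real.exp_le_exp.mpr hx1
  have h3 : Real.exp 1 < 3 := by
    have := Real.exp_one_lt_d9; linarith
  linarith

lemma my_log_sinh_lim (u : ℝ) (α : ℝ → ℝ)
    (hpos : ∀ L : ℝ, 0 < L → 0 < α L)
    (hsmall : ∀ᶠ L in atTop, α L < 1)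
    (hlim : Tendsto (fun L : ℝ => Real.log (α L) / L) atTop (nhds (-u))) :
    Tendsto (fun L : ℝ => Real.log (Real.sinh (α L)) / L) atTop (nhds (-u)) := by
  have hupper : Tendsto (fun L : ℝ => Real.log (α L) / L + Real.log 3 / L) atTop
      (nhds (-u)) := by
    have h0 : Tendsto (fun L : ℝ => Real.log 3 / L) atTop (nhds 0) :=
      tendsto_const_nhds.div_atTop tendsto_id
    simpa using hlim.add h0
  refine tendsto_of_tendsto_of_tendsto_of_le_of_le' hlim hupper ?_ ?_
  · filter_upwards [eventually_gt_atTop 0] with L hL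
    have hα := hpos L hL
    have : Real.log (α L) ≤ Real.log (Real.sinh (α L)) :=
      Real.log_le_log hα (Real.self_le_sinh_iff.mpr hα.le)
    exact div_le_div_of_nonneg_right this hL.le
  · filter_upwards [eventually_gt_atTop 0, hsmall] with L hL h1
    have hα := hpos L hL
    have hs : Real.sinh (α L) ≤ 3 * α L := my_sinh_le_three hα.le h1.le
    have hspos : 0 < Real.sinh (α L) := Real.sinh_pos_iff.mpr hα
    have : Real.log (Real.sinh (α L)) ≤ Real.log 3 + Real.log (α L) := by
      calc Real.log (Real.sinh (α L)) ≤ Real.log (3 * α L) := Real.log_le_log hspos hs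
        _ = Real.log 3 + Real.log (α L) := Real.log_mul (by norm_num) hα.ne'
    calc Real.log (Real.sinh (α L)) / L ≤ (Real.log 3 + Real.log (α L)) / L :=
          div_le_div_of_nonneg_right this hL.le
      _ = Real.log (α L) / L + Real.log 3 / L := by ring

/-- Growth of the boundary side of a degenerating right-angled hexagon: if
`α₁, α₂, α₃ : (0,∞) → (0,∞)` satisfy `(1/λ)·log α_m(λ) → −u_m` with `u_m > 0`, and
`B λ ≥ 0` is defined (for `λ > 0`) by the right-angled-hexagon cosine rule
`cosh (B λ) = (cosh (α₃ λ) + cosh (α₁ λ)·cosh (α₂ λ)) / (sinh (α₁ λ)·sinh (α₂ λ))`,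
then `B λ / λ → u₁ + u₂` as `λ → ∞`. -/
theorem hexagon_boundary_side_growth (u₁ u₂ u₃ : ℝ)
    (hu₁ : 0 < u₁) (hu₂ : 0 < u₂) (hu₃ : 0 < u₃)
    (α₁ α₂ α₃ B : ℝ → ℝ)
    (hα₁pos : ∀ L : ℝ, 0 < L → 0 < α₁ L)
    (hα₂pos : ∀ L : ℝ, 0 < L → 0 < α₂ L)
    (hα₃pos : ∀ L : ℝ, 0 < L → 0 < α₃ L)
    (hlim₁ : Filter.Tendsto (fun L : ℝ => Real.log (α₁ L) / L) Filter.atTop (nhds (-u₁)))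
    (hlim₂ : Filter.Tendsto (fun L : ℝ => Real.log (α₂ L) / L) Filter.atTop (nhds (-u₂)))
    (hlim₃ : Filter.Tendsto (fun L : ℝ => Real.log (α₃ L) / L) Filter.atTop (nhds (-u₃)))
    (hB : ∀ L : ℝ, 0 < L → 0 ≤ B L ∧
      Real.cosh (B L) =
        (Real.cosh (α₃ L) + Real.cosh (α₁ L) * Real.cosh (α₂ L)) /
          (Real.sinh (α₁ L) * Real.sinh (α₂ L))) :
    Filter.Tendsto (fun L : ℝ => B L / L) Filter.atTop (nhds (u₁ + u₂)) := by
  -- eventually all α's are < 1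
  have hsm : ∀ (u : ℝ) (α : ℝ → ℝ), 0 < u → (∀ L : ℝ, 0 < L → 0 < α L) →
      Tendsto (fun L : ℝ => Real.log (α L) / L) atTop (nhds (-u)) →
      ∀ᶠ L in atTop, α L < 1 := by
    intro u α hu hpos hlim
    filter_upwards [hlim.eventually_lt_const (by linarith : -u < 0),
      eventually_gt_atTop 0] with L h hL
    have hlog : Real.log (α L) < 0 := by
      by_contra hc
      push_neg at hc
      have : 0 ≤ Real.log (α L) / L := div_nonneg hc hL.le
      linarith
    exact (Real.log_neg_iff (hpos L hL)).mp hlog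
  have h1s := hsm u₁ α₁ hu₁ hα₁pos hlim₁
  have h2s := hsm u₂ α₂ hu₂ hα₂pos hlim₂
  have h3s := hsm u₃ α₃ hu₃ hα₃pos hlim₃
  -- numerator and its log
  set N : ℝ → ℝ := fun L => Real.cosh (α₃ L) + Real.cosh (α₁ L) * Real.cosh (α₂ L) with hN
  have hN2 : ∀ L : ℝ, 2 ≤ N L := by
    intro L
    simp only [hN]
    have := Real.one_le_cosh (α₃ L)
    have h1 := Real.one_le_cosh (α₁ L)
    have h2 := Real.one_le_cosh (α₂ L)
    nlinarith
  have hNlim : Tendsto (fun L : ℝ => Real.log (N L) / L) atTop (nhds 0) := by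
    have hlow : Tendsto (fun L : ℝ => Real.log 2 / L) atTop (nhds 0) :=
      tendsto_const_nhds.div_atTop tendsto_id
    have hhigh : Tendsto (fun L : ℝ => Real.log 12 / L) atTop (nhds 0) :=
      tendsto_const_nhds.div_atTop tendsto_id
    refine tendsto_of_tendsto_of_tendsto_of_le_of_le' hlow hhigh ?_ ?_
    · filter_upwards [eventually_gt_atTop 0] with L hL
      exact div_le_div_of_nonneg_right (Real.log_le_log (by norm_num) (hN2 L)) hL.le
    · filter_upwards [eventually_gt_atTop 0, h1s, h2s, h3s] with L hL e1 e2 e3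
      have c1 := my_cosh_le_three (hα₁pos L hL).le e1.le
      have c2 := my_cosh_le_three (hα₂pos L hL).le e2.le
      have c3 := my_cosh_le_three (hα₃pos L hL).le e3.le
      have hNle : N L ≤ 12 := by
        simp only [hN]
        have g1 := Real.one_le_cosh (α₁ L)
        have g2 := Real.one_le_cosh (α₂ L)
        nlinarith
      have : Real.log (N L) ≤ Real.log 12 :=
        Real.log_le_log (by linarith [hN2 L]) hNle
      exact div_le_div_of_nonneg_right this hL.le
  -- log of sinh terms
  have hs1 := my_log_sinh_lim u₁ α₁ hα₁pos h1s hlim₁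
  have hs2 := my_log_sinh_lim u₂ α₂ hα₂pos h2s hlim₂
  -- the log of the RHS
  set g : ℝ → ℝ := fun L =>
    Real.log (N L / (Real.sinh (α₁ L) * Real.sinh (α₂ L))) with hg
  have hglim : Tendsto (fun L : ℝ => g L / L) atTop (nhds (u₁ + u₂)) := by
    have key : Tendsto (fun L : ℝ => Real.log (N L) / L
        - Real.log (Real.sinh (α₁ L)) / L - Real.log (Real.sinh (α₂ L)) / L)
        atTop (nhds (u₁ + u₂)) := by
      have := (hNlim.sub hs1).sub hs2
      simpa using this
    refine key.congr' ?_
    filter_upwards [eventually_gt_atTop 0] with L hL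
    have s1 : 0 < Real.sinh (α₁ L) := Real.sinh_pos_iff.mpr (hα₁pos L hL)
    have s2 : 0 < Real.sinh (α₂ L) := Real.sinh_pos_iff.mpr (hα₂pos L hL)
    have hNpos : (0:ℝ) < N L := by linarith [hN2 L]
    have : g L = Real.log (N L) - Real.log (Real.sinh (α₁ L))
        - Real.log (Real.sinh (α₂ L)) := by
      simp only [hg]
      rw [Real.log_div hNpos.ne' (by positivity), Real.log_mul s1.ne' s2.ne']
      ring
    rw [this]; ring
  -- squeeze B L / L between g L / L and g L / L + log 2 / L
  have hupper : Tendsto (fun L : ℝ => g L / L + Real.log 2 / L) atTop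
      (nhds (u₁ + u₂)) := by
    have h0 : Tendsto (fun L : ℝ => Real.log 2 / L) atTop (nhds 0) :=
      tendsto_const_nhds.div_atTop tendsto_id
    simpa using hglim.add h0
  refine tendsto_of_tendsto_of_tendsto_of_le_of_le' hglim hupper ?_ ?_
  · -- g L / L ≤ B L / L
    filter_upwards [eventually_gt_atTop 0] with L hL
    obtain ⟨hB0, hBc⟩ := hB L hL
    have s1 : 0 < Real.sinh (α₁ L) := Real.sinh_pos_iff.mpr (hα₁pos L hL)
    have s2 : 0 < Real.sinh (α₂ L) := Real.sinh_pos_iff.mpr (hα₂pos L hL)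
    have hNpos : (0:ℝ) < N L := by linarith [hN2 L]
    have hRpos : 0 < N L / (Real.sinh (α₁ L) * Real.sinh (α₂ L)) := by positivity
    have hcosh_le : Real.cosh (B L) ≤ Real.exp (B L) := my_cosh_le_exp hB0
    have : g L ≤ B L := by
      simp only [hg]
      rw [Real.log_le_iff_le_exp hRpos]
      rw [← hBc]
      exact hcosh_le
    exact div_le_div_of_nonneg_right this hL.le
  · -- B L / L ≤ g L / L + log 2 / L
    filter_upwards [eventually_gt_atTop 0] with L hL
    obtain ⟨hB0, hBc⟩ := hB L hL
    have s1 : 0 < Real.sinh (α₁ L) := Real.sinh_pos_iff.mpr (hα₁pos L hL)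
    have s2 : 0 < Real.sinh (α₂ L) := Real.sinh_pos_iff.mpr (hα₂pos L hL)
    have hNpos : (0:ℝ) < N L := by linarith [hN2 L]
    have hRpos : 0 < N L / (Real.sinh (α₁ L) * Real.sinh (α₂ L)) := by positivity
    have hexp_le : Real.exp (B L) ≤ 2 * (N L / (Real.sinh (α₁ L) * Real.sinh (α₂ L))) := by
      rw [← hBc, Real.cosh_eq]
      have := (Real.exp_pos (-B L)).le
      linarith
    have : B L ≤ Real.log 2 + g L := by
      have h2 : B L = Real.log (Real.exp (B L)) := (Real.log_exp _).symm
      rw [h2]; simp only [hg]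
      calc Real.log (Real.exp (B L))
          ≤ Real.log (2 * (N L / (Real.sinh (α₁ L) * Real.sinh (α₂ L)))) :=
            Real.log_le_log (Real.exp_pos _) hexp_le
        _ = Real.log 2 + Real.log (N L / (Real.sinh (α₁ L) * Real.sinh (α₂ L))) :=
            Real.log_mul (by norm_num) hRpos.ne'
    calc B L / L ≤ (Real.log 2 + g L) / L := div_le_div_of_nonneg_right this hL.le
      _ = g L / L + Real.log 2 / L := by ring
end

section
/- Let Γ be a type and ℓ₀ : Γ → ℝ a function with ℓ₀(γ) > 0 for all γ, with {γ : ℓ₀(γ) ≤ T} finite for every T, and with exponential growth rate h(ℓ₀) finite and strictly positive. Let (ℓ_t)_{t ∈ (0,1)} be a family of functions Γ → ℝ and ε : (0,1) → ℝ a function with 0 ≤ ε(t) < 1 such that |ℓ_t(γ) − ℓ₀(γ)| ≤ ε(t)·ℓ₀(γ) for all γ and t, and such that ε(t)/t → 0 as t → 0⁺. Then (h(ℓ_t) − h(ℓ₀))/t → 0 as t → 0⁺; in particular, the one-sided derivative of t ↦ h(ℓ_t) at t = 0 exists and equals 0. -/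
/-!
Closeness `|ℓ_t − ℓ₀| ≤ ε ℓ₀` sandwiches `ℓ_t` between `(1 − ε) ℓ₀` and `(1 + ε) ℓ₀`. Counting
is antitone in the length function and `h(c ℓ) = h(ℓ) / c`, so `h(ℓ_t)` lies between
`h(ℓ₀) / (1 + ε)` and `h(ℓ₀) / (1 − ε)`, i.e. `|h(ℓ_t) − h(ℓ₀)| ≤ h(ℓ₀) ε / (1 − ε)`, which is
`o(t)` because `ε(t) = o(t)`.
-/

/-- The exponential growth rate (topological entropy) of a positive "length" function
`ℓ : Γ → ℝ`: `h(ℓ) := limsup_{T → ∞} (1/T) · log #{γ : ℓ γ ≤ T}`, valued in `[0, ∞]`. -/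
noncomputable def growthRate {Γ : Type*} (ℓ : Γ → ℝ) : ENNReal :=
  Filter.limsup
    (fun T : ℝ => ENNReal.ofReal (Real.log (Nat.card {γ : Γ // ℓ γ ≤ T} : ℝ) / T))
    Filter.atTop

open Filter Topology

lemma abs_sub_le_of_inv_mul_le_of_le_inv_mul {x H e : ℝ} (hH : 0 ≤ H) (he₀ : 0 ≤ e)
    (he₁ : e < 1) (hlow : (1 + e)⁻¹ * H ≤ x) (hup : x ≤ (1 - e)⁻¹ * H) :
    |x - H| ≤ e / (1 - e) * H := by
  have h1e : 0 < 1 - e := sub_pos.mpr he₁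
  have hup' : (1 - e)⁻¹ * H = H + e / (1 - e) * H := by field_simp; ring
  have hlow' : (1 + e)⁻¹ * H = H - e / (1 + e) * H := by field_simp; ring
  have hcmp : e / (1 + e) * H ≤ e / (1 - e) * H := by gcongr; linarith
  rw [abs_le]
  constructor <;> linarith

section GrowthRate

variable {Γ : Type*}

lemma setOf_const_mul_le_finite {ℓ : Γ → ℝ} (hfin : ∀ T : ℝ, {γ | ℓ γ ≤ T}.Finite)
    {c : ℝ} (hc : 0 < c) (T : ℝ) : {γ | c * ℓ γ ≤ T}.Finite := by
  simpa only [← le_div_iff₀' hc] using hfin (T / c)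

/-- Nonincreasing in the length function; the finiteness hypothesis matters because
`Nat.card` of an infinite type is `0`. -/
lemma growthRate_le_of_le {ℓ ℓ' : Γ → ℝ} (hfin : ∀ T : ℝ, {γ | ℓ γ ≤ T}.Finite)
    (hle : ∀ γ, ℓ γ ≤ ℓ' γ) : growthRate ℓ' ≤ growthRate ℓ := by
  refine limsup_le_limsup (Eventually.of_forall fun T => ?_)
  rcases le_or_gt T 0 with hT | hT
  · simp [ENNReal.ofReal_of_nonpos
      (div_nonpos_of_nonneg_of_nonpos (Real.log_natCast_nonneg _) hT)]
  have hcard : Nat.card {γ // ℓ' γ ≤ T} ≤ Nat.card {γ // ℓ γ ≤ T} :=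
    Nat.card_mono (hfin T) fun γ hγ => (hle γ).trans hγ
  have hlog : Real.log (Nat.card {γ // ℓ' γ ≤ T}) ≤ Real.log (Nat.card {γ // ℓ γ ≤ T}) := by
    rcases Nat.eq_zero_or_pos (Nat.card {γ // ℓ' γ ≤ T}) with h0 | h0
    · simpa [h0] using Real.log_natCast_nonneg _
    · exact Real.log_le_log (by exact_mod_cast h0) (by exact_mod_cast hcard)
  exact ENNReal.ofReal_le_ofReal (div_le_div_of_nonneg_right hlog hT.le)

lemma growthRate_const_mul (ℓ : Γ → ℝ) {c : ℝ} (hc : 0 < c) :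
    growthRate (fun γ => c * ℓ γ) = ENNReal.ofReal c⁻¹ * growthRate ℓ := by
  set rescale := OrderIso.mulLeft₀ c⁻¹ (inv_pos.mpr hc)
  have hcomp : (fun T : ℝ => ENNReal.ofReal (Real.log (Nat.card {γ // c * ℓ γ ≤ T}) / T)) =
      (fun S : ℝ => ENNReal.ofReal c⁻¹ *
        ENNReal.ofReal (Real.log (Nat.card {γ // ℓ γ ≤ S}) / S)) ∘ rescale := by
    funext T
    have hcard : Nat.card {γ // c * ℓ γ ≤ T} = Nat.card {γ // ℓ γ ≤ c⁻¹ * T} := by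
      simp only [← div_eq_inv_mul, le_div_iff₀' hc]
    rw [Function.comp_apply, ← ENNReal.ofReal_mul (inv_nonneg.mpr hc.le), hcard]
    simp only [rescale, OrderIso.mulLeft₀_apply]
    generalize Real.log (Nat.card {γ // ℓ γ ≤ c⁻¹ * T}) = L
    rcases eq_or_ne T 0 with rfl | hT
    · simp
    · field_simp
  rw [growthRate, growthRate, hcomp, limsup_comp, rescale.map_atTop,
    ENNReal.limsup_const_mul_of_ne_top ENNReal.ofReal_ne_top]

lemma growthRate_le_of_const_mul_le {ℓ₀ ℓ : Γ → ℝ} (hfin : ∀ T : ℝ, {γ | ℓ₀ γ ≤ T}.Finite)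
    {c : ℝ} (hc : 0 < c) (hle : ∀ γ, c * ℓ₀ γ ≤ ℓ γ) :
    growthRate ℓ ≤ ENNReal.ofReal c⁻¹ * growthRate ℓ₀ :=
  growthRate_const_mul ℓ₀ hc ▸ growthRate_le_of_le (setOf_const_mul_le_finite hfin hc) hle

lemma le_growthRate_of_le_const_mul {ℓ₀ ℓ : Γ → ℝ} (hfin : ∀ T : ℝ, {γ | ℓ γ ≤ T}.Finite)
    {c : ℝ} (hc : 0 < c) (hle : ∀ γ, ℓ γ ≤ c * ℓ₀ γ) :
    ENNReal.ofReal c⁻¹ * growthRate ℓ₀ ≤ growthRate ℓ :=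
  growthRate_const_mul ℓ₀ hc ▸ growthRate_le_of_le hfin hle

lemma abs_toReal_growthRate_sub_le {ℓ₀ ℓ : Γ → ℝ} (hfin : ∀ T : ℝ, {γ | ℓ₀ γ ≤ T}.Finite)
    (hfin₀ : growthRate ℓ₀ ≠ ⊤) {e : ℝ} (he₀ : 0 ≤ e) (he₁ : e < 1)
    (hclose : ∀ γ, |ℓ γ - ℓ₀ γ| ≤ e * ℓ₀ γ) :
    |(growthRate ℓ).toReal - (growthRate ℓ₀).toReal| ≤ e / (1 - e) * (growthRate ℓ₀).toReal := by
  have hlow : ∀ γ, (1 - e) * ℓ₀ γ ≤ ℓ γ := fun γ => by linarith [(abs_le.mp (hclose γ)).1]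
  have hhigh : ∀ γ, ℓ γ ≤ (1 + e) * ℓ₀ γ := fun γ => by linarith [(abs_le.mp (hclose γ)).2]
  have hfin' : ∀ T : ℝ, {γ | ℓ γ ≤ T}.Finite := fun T =>
    (setOf_const_mul_le_finite hfin (sub_pos.mpr he₁) T).subset fun γ hγ => (hlow γ).trans hγ
  have hup := growthRate_le_of_const_mul_le hfin (sub_pos.mpr he₁) hlow
  have hdown := le_growthRate_of_le_const_mul (ℓ₀ := ℓ₀) hfin' (by linarith) hhigh
  have hfin_ne : growthRate ℓ ≠ ⊤ :=
    ne_top_of_le_ne_top (ENNReal.mul_ne_top ENNReal.ofReal_ne_top hfin₀) hup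
  have hupR := ENNReal.toReal_mono (ENNReal.mul_ne_top ENNReal.ofReal_ne_top hfin₀) hup
  have hdownR := ENNReal.toReal_mono hfin_ne hdown
  rw [ENNReal.toReal_mul, ENNReal.toReal_ofReal (inv_nonneg.mpr (sub_pos.mpr he₁).le)] at hupR
  rw [ENNReal.toReal_mul, ENNReal.toReal_ofReal (inv_nonneg.mpr (by linarith))] at hdownR
  exact abs_sub_le_of_inv_mul_le_of_le_inv_mul ENNReal.toReal_nonneg he₀ he₁ hdownR hupR

end GrowthRate

theorem growthRate_deriv_zero_general {Γ : Type*} (ℓ₀ : Γ → ℝ)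
    (hfin : ∀ T : ℝ, {γ : Γ | ℓ₀ γ ≤ T}.Finite)
    (h0fin : growthRate ℓ₀ < ⊤)
    (ℓ : ℝ → Γ → ℝ) (ε : ℝ → ℝ)
    (hε : ∀ t ∈ Set.Ioo (0 : ℝ) 1, 0 ≤ ε t ∧ ε t < 1)
    (hcomp : ∀ t ∈ Set.Ioo (0 : ℝ) 1, ∀ γ, |ℓ t γ - ℓ₀ γ| ≤ ε t * ℓ₀ γ)
    (hεlim : Filter.Tendsto (fun t : ℝ => ε t / t) (nhdsWithin 0 (Set.Ioi 0)) (nhds 0)) :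
    Filter.Tendsto
      (fun t : ℝ => ((growthRate (ℓ t)).toReal - (growthRate ℓ₀).toReal) / t)
      (nhdsWithin 0 (Set.Ioi 0)) (nhds 0) := by
  set H := (growthRate ℓ₀).toReal
  have hε_tendsto : Tendsto ε (𝓝[>] 0) (𝓝 0) := by
    have := hεlim.mul (tendsto_nhdsWithin_of_tendsto_nhds tendsto_id)
    rw [zero_mul] at this
    refine this.congr' ?_
    filter_upwards [self_mem_nhdsWithin] with t (ht : 0 < t) using div_mul_cancel₀ _ ht.ne'
  have hbound : Tendsto (fun t => ε t / t / (1 - ε t) * H) (𝓝[>] 0) (𝓝 0) := by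
    simpa using (hεlim.div (tendsto_const_nhds.sub hε_tendsto) (by norm_num)).mul_const H
  refine squeeze_zero_norm' ?_ hbound
  filter_upwards [Ioo_mem_nhdsGT one_pos] with t ht
  obtain ⟨he₀, he₁⟩ := hε t ht
  rw [Real.norm_eq_abs, abs_div, abs_of_pos ht.1, div_le_iff₀ ht.1]
  calc _ ≤ ε t / (1 - ε t) * H :=
        abs_toReal_growthRate_sub_le hfin h0fin.ne he₀ he₁ (hcomp t ht)
    _ = ε t / t / (1 - ε t) * H * t := by field_simp [ht.1.ne']

/-- If `|ℓ_t − ℓ₀| ≤ ε(t)·ℓ₀` pointwise with `0 ≤ ε(t) < 1` and `ε(t)/t → 0` as `t → 0⁺`,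
and `h(ℓ₀)` is finite and positive, then `(h(ℓ_t) − h(ℓ₀))/t → 0` as `t → 0⁺`; in
particular the one-sided derivative of `t ↦ h(ℓ_t)` at `t = 0` exists and equals `0`. -/
theorem growthRate_deriv_zero {Γ : Type*} (ℓ₀ : Γ → ℝ)
    (hpos : ∀ γ, 0 < ℓ₀ γ)
    (hfin : ∀ T : ℝ, {γ : Γ | ℓ₀ γ ≤ T}.Finite)
    (h0pos : 0 < growthRate ℓ₀) (h0fin : growthRate ℓ₀ < ⊤)
    (ℓ : ℝ → Γ → ℝ) (ε : ℝ → ℝ)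
    (hε : ∀ t ∈ Set.Ioo (0 : ℝ) 1, 0 ≤ ε t ∧ ε t < 1)
    (hcomp : ∀ t ∈ Set.Ioo (0 : ℝ) 1, ∀ γ, |ℓ t γ - ℓ₀ γ| ≤ ε t * ℓ₀ γ)
    (hεlim : Filter.Tendsto (fun t : ℝ => ε t / t) (nhdsWithin 0 (Set.Ioi 0)) (nhds 0)) :
    Filter.Tendsto
      (fun t : ℝ => ((growthRate (ℓ t)).toReal - (growthRate ℓ₀).toReal) / t)
      (nhdsWithin 0 (Set.Ioi 0)) (nhds 0) :=
  growthRate_deriv_zero_general ℓ₀ hfin h0fin ℓ ε hε hcomp hεlim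
end
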